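/- arXiv:1104.2477 — 3 statements merged into one kernel-verified Lean document; each statement's English description precedes it below -/
import Mathlib

section
/- For every natural number n ≥ 1, the number of non-crossing partitions of the set {1, 2, …, n} equals the n-th Catalan number C(n) = (1/(n+1))·binom(2n, n). -/
/-!
Let `k + 1` be the least positive point in the block of `0` of a non-crossing partition of
`{0, …, n}` (with `k = n` if `0` is a singleton). No block meets both `{1, …, k}` and
`{k + 1, …, n}`, since it would cross the block of `0`, so the partition is the disjoint union of
its restrictions to these two intervals, except that `0` joins the block of `k + 1`. Conversely,
any two non-crossing partitions of `{1, …, k}` and `{k + 1, …, n}` glue back in this way. Hence the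
number of non-crossing partitions satisfies the Catalan recursion
`C (n + 1) = ∑ k ≤ n, C k * C (n - k)`.
-/

/-- A finpartition of `{0, …, n-1}` (representing `{1, …, n}`) is *non-crossing* if
there are no indices `a < b < c < d` such that some block contains both `a` and `c`
while a different block contains both `b` and `d`. -/
def Finpartition.NonCrossing {n : ℕ}
    (P : Finpartition (Finset.univ : Finset (Fin n))) : Prop :=
  ¬ ∃ a b c d : Fin n, a < b ∧ b < c ∧ c < d ∧
      ∃ B ∈ P.parts, ∃ B' ∈ P.parts, B ≠ B' ∧
        a ∈ B ∧ c ∈ B ∧ b ∈ B' ∧ d ∈ B'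

namespace Setoid

variable {α β : Type*}

def NonCrossing [LT α] (r : Setoid α) : Prop :=
  ∀ ⦃a b c d : α⦄, a < b → b < c → c < d → r a c → r b d → r a b

theorem NonCrossing.comap [Preorder α] [Preorder β] {r : Setoid β} (hr : r.NonCrossing)
    {f : α → β} (hf : StrictMono f) : (r.comap f).NonCrossing :=
  fun _ _ _ _ hab hbc hcd => hr (hf hab) (hf hbc) (hf hcd)

theorem NonCrossing.rel_of_le_of_lt_of_le [PartialOrder α] {r : Setoid α} (hr : r.NonCrossing)
    {a b c d : α} (hab : a ≤ b) (hbc : b < c) (hcd : c ≤ d) (hac : r a c) (hbd : r b d) :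
    r a b := by
  obtain rfl | hab := hab.eq_or_lt
  · exact r.refl' a
  obtain rfl | hcd := hcd.eq_or_lt
  · exact r.trans' hac (r.symm' hbd)
  exact hr hab hbc hcd hac hbd

instance [Finite α] : Finite (Setoid α) :=
  Finite.of_injective (fun r : Setoid α => r.r) fun _ _ h =>
    Setoid.ext fun a b => iff_of_eq (congrFun₂ h a b)

end Setoid

open Finset

namespace Finpartition

variable {α : Type*} [DecidableEq α]

theorem eq_of_forall_part_eq {s : Finset α} {P Q : Finpartition s}
    (h : ∀ a ∈ s, P.part a = Q.part a) : P = Q := by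
  suffices key : ∀ {P Q : Finpartition s}, (∀ a ∈ s, P.part a = Q.part a) →
      ∀ B ∈ P.parts, B ∈ Q.parts from
    Finpartition.ext <| Finset.ext fun B =>
      ⟨key h B, key (fun a ha => (h a ha).symm) B⟩
  intro P Q h B hB
  obtain ⟨a, ha⟩ := P.nonempty_of_mem_parts hB
  have has : a ∈ s := P.le hB ha
  rw [← P.part_eq_of_mem hB ha, h a has]
  exact Q.part_mem.2 has

variable [Fintype α]

noncomputable def equivSetoid : Finpartition (univ : Finset α) ≃ Setoid α where
  toFun P := Setoid.ker P.part
  invFun r := by classical exact ofSetoid r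
  left_inv P := eq_of_forall_part_eq fun a _ => by
    classical
    ext b
    rw [mem_part_ofSetoid_iff_rel, Setoid.ker_def,
      P.mem_part_iff_part_eq_part (mem_univ b) (mem_univ a), eq_comm]
  right_inv r := Setoid.ext fun a b => by
    classical
    rw [Setoid.ker_def]
    exact eq_comm.trans <| (mem_part_iff_part_eq_part _ (mem_univ b) (mem_univ a)).symm.trans
      mem_part_ofSetoid_iff_rel

theorem nonCrossing_iff {n : ℕ} (P : Finpartition (univ : Finset (Fin n))) :
    P.NonCrossing ↔ (equivSetoid P).NonCrossing := by
  refine ⟨fun hP a b c d hab hbc hcd hac hbd => ?_, ?_⟩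
  · by_contra hne
    refine hP ⟨a, b, c, d, hab, hbc, hcd, P.part a, P.part_mem.2 (mem_univ a), P.part b,
      P.part_mem.2 (mem_univ b), hne, P.mem_part_self.2 (mem_univ a), ?_,
      P.mem_part_self.2 (mem_univ b), ?_⟩
    · exact (Setoid.ker_def.1 hac).symm ▸ P.mem_part_self.2 (mem_univ c)
    · exact (Setoid.ker_def.1 hbd).symm ▸ P.mem_part_self.2 (mem_univ d)
  · rintro hP ⟨a, b, c, d, hab, hbc, hcd, B, hB, B', hB', hne, ha, hc, hb, hd⟩
    have key : P.part a = P.part b := hP hab hbc hcd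
      (Setoid.ker_def.2 <| (P.part_eq_of_mem hB ha).trans (P.part_eq_of_mem hB hc).symm)
      (Setoid.ker_def.2 <| (P.part_eq_of_mem hB' hb).trans (P.part_eq_of_mem hB' hd).symm)
    rw [P.part_eq_of_mem hB ha, P.part_eq_of_mem hB' hb] at key
    exact hne key

end Finpartition

namespace Setoid

variable {n : ℕ}

open Classical in
/-- `firstReturn r + 1` is the least positive point in the block of `0`, or `n + 1` if there is
none. -/
noncomputable def firstReturn (r : Setoid (Fin (n + 1))) : Fin (n + 1) :=
  ⟨Nat.find (p := fun m => ∀ x : Fin (n + 1), x.val = m + 1 → r 0 x) ⟨n, fun x hx => by omega⟩,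
    Nat.lt_succ_of_le (Nat.find_min' _ fun x hx => by omega)⟩

def leftEmb (k : Fin (n + 1)) (i : Fin k) : Fin (n + 1) := ⟨i + 1, by omega⟩

def rightEmb (k : Fin (n + 1)) (i : Fin (n - k)) : Fin (n + 1) := ⟨i + k + 1, by omega⟩

variable {k : Fin (n + 1)}

@[simp] theorem val_leftEmb (i : Fin k) : (leftEmb k i).val = i + 1 := rfl

@[simp] theorem val_rightEmb (i : Fin (n - k)) : (rightEmb k i).val = i + k + 1 := rfl

theorem leftEmb_strictMono : StrictMono (leftEmb k) := fun i j h => by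
  simp only [leftEmb, Fin.mk_lt_mk]; omega

theorem rightEmb_strictMono : StrictMono (rightEmb k) := fun i j h => by
  simp only [rightEmb, Fin.mk_lt_mk]; omega

theorem leftEmb_lt_rightEmb (i : Fin k) (j : Fin (n - k)) : leftEmb k i < rightEmb k j := by
  rw [Fin.lt_def, val_leftEmb, val_rightEmb]; omega

theorem eq_zero_or_leftEmb_or_rightEmb (x : Fin (n + 1)) :
    x = 0 ∨ (∃ i, x = leftEmb k i) ∨ ∃ i, x = rightEmb k i := by
  by_cases hx0 : x.val = 0
  · exact .inl (Fin.ext hx0)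
  by_cases hxk : x.val ≤ k
  · exact .inr (.inl ⟨⟨x - 1, by omega⟩, Fin.ext (by simp only [leftEmb]; omega)⟩)
  · exact .inr (.inr ⟨⟨x - (k + 1), by omega⟩, Fin.ext (by simp only [rightEmb]; omega)⟩)

variable (g : Setoid (Fin k)) (h : Setoid (Fin (n - k)))

def glueLabel (x : Fin (n + 1)) : Quotient g ⊕ Option (Quotient h) :=
  if hx0 : x.val = 0 then .inr (if h0 : 0 < n - k then some (Quotient.mk h ⟨0, h0⟩) else none)
  else if hxk : x.val ≤ k then .inl (Quotient.mk g ⟨x - 1, by omega⟩)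
  else .inr (some (Quotient.mk h ⟨x - (k + 1), by omega⟩))

/-- Places `g` on `{1, …, k}` and `h` on `{k + 1, …, n}`, and puts `0` into the block of `k + 1`
(a singleton block if `k = n`). -/
def glue : Setoid (Fin (n + 1)) := ker (glueLabel g h)

variable {g h}

@[simp] theorem glueLabel_leftEmb (i : Fin k) :
    glueLabel g h (leftEmb k i) = .inl (Quotient.mk g i) := by
  rw [glueLabel, dif_neg (by simp), dif_pos (by simp)]
  congr

@[simp] theorem glueLabel_rightEmb (i : Fin (n - k)) :
    glueLabel g h (rightEmb k i) = .inr (some (Quotient.mk h i)) := by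
  rw [glueLabel, dif_neg (by simp), dif_neg (by simp)]
  congr; simp

theorem glueLabel_zero (h0 : 0 < n - k) :
    glueLabel g h 0 = glueLabel g h (rightEmb k ⟨0, h0⟩) := by
  rw [glueLabel_rightEmb]
  simp [glueLabel, h0]

theorem glue_iff {x y : Fin (n + 1)} : glue g h x y ↔ glueLabel g h x = glueLabel g h y :=
  Iff.rfl

@[simp] theorem glue_leftEmb_leftEmb {i j : Fin k} :
    glue g h (leftEmb k i) (leftEmb k j) ↔ g i j := by
  simp [glue_iff, Quotient.eq]

@[simp] theorem glue_rightEmb_rightEmb {i j : Fin (n - k)} :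
    glue g h (rightEmb k i) (rightEmb k j) ↔ h i j := by
  simp [glue_iff, Quotient.eq]

theorem not_glue_leftEmb_rightEmb {i : Fin k} {j : Fin (n - k)} :
    ¬ glue g h (leftEmb k i) (rightEmb k j) := by
  simp [glue_iff]

theorem not_glue_zero_leftEmb {i : Fin k} : ¬ glue g h 0 (leftEmb k i) := by
  simp [glue_iff, glueLabel]

theorem glue_zero_rightEmb {j : Fin (n - k)} :
    glue g h 0 (rightEmb k j) ↔ h ⟨0, j.pos⟩ j := by
  rw [glue_iff, glueLabel_zero j.pos, ← glue_iff, glue_rightEmb_rightEmb]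

theorem NonCrossing.glue (hg : g.NonCrossing) (hh : h.NonCrossing) :
    (glue g h).NonCrossing := by
  -- The order and the two relations put `a, b, c, d` all into `{1, …, k}` or all into
  -- `{0, k + 1, …, n}`; in the latter case `0` and `k + 1` both stand for the point `0` of `h`.
  intro a b c d hab hbc hcd hac hbd
  obtain rfl | ⟨c, rfl⟩ | ⟨c, rfl⟩ := eq_zero_or_leftEmb_or_rightEmb (k := k) c
  · exact absurd hbc (Fin.not_lt_zero b)
  · obtain rfl | ⟨a, rfl⟩ | ⟨a, rfl⟩ := eq_zero_or_leftEmb_or_rightEmb (k := k) a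
    · exact absurd hac not_glue_zero_leftEmb
    · obtain rfl | ⟨b, rfl⟩ | ⟨b, rfl⟩ := eq_zero_or_leftEmb_or_rightEmb (k := k) b
      · exact absurd hab (Fin.not_lt_zero _)
      · obtain rfl | ⟨d, rfl⟩ | ⟨d, rfl⟩ := eq_zero_or_leftEmb_or_rightEmb (k := k) d
        · exact absurd hcd (Fin.not_lt_zero _)
        · simp only [glue_leftEmb_leftEmb, leftEmb_strictMono.lt_iff_lt] at *
          exact hg hab hbc hcd hac hbd
        · exact absurd hbd not_glue_leftEmb_rightEmb
      · exact absurd hbc (leftEmb_lt_rightEmb c b).asymm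
    · exact absurd (hab.trans hbc) (leftEmb_lt_rightEmb c a).asymm
  · obtain rfl | ⟨d, rfl⟩ | ⟨d, rfl⟩ := eq_zero_or_leftEmb_or_rightEmb (k := k) d
    · exact absurd hcd (Fin.not_lt_zero _)
    · exact absurd hcd (leftEmb_lt_rightEmb d c).asymm
    obtain rfl | ⟨b, rfl⟩ | ⟨b, rfl⟩ := eq_zero_or_leftEmb_or_rightEmb (k := k) b
    · exact absurd hab (Fin.not_lt_zero _)
    · exact absurd hbd not_glue_leftEmb_rightEmb
    obtain rfl | ⟨a, rfl⟩ | ⟨a, rfl⟩ := eq_zero_or_leftEmb_or_rightEmb (k := k) a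
    · rw [glue_zero_rightEmb] at hac ⊢
      rw [glue_rightEmb_rightEmb] at hbd
      exact hh.rel_of_le_of_lt_of_le (Fin.le_def.2 (Nat.zero_le _))
        (rightEmb_strictMono.lt_iff_lt.1 hbc) (rightEmb_strictMono.lt_iff_lt.1 hcd).le hac hbd
    · exact absurd hac not_glue_leftEmb_rightEmb
    · simp only [glue_rightEmb_rightEmb, rightEmb_strictMono.lt_iff_lt] at *
      exact hh hab hbc hcd hac hbd

variable {r : Setoid (Fin (n + 1))}

open Classical in
theorem firstReturn_eq_iff :
    firstReturn r = k ↔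
      (∀ i : Fin k, ¬ r 0 (leftEmb k i)) ∧ ∀ h0 : 0 < n - k, r 0 (rightEmb k ⟨0, h0⟩) := by
  rw [firstReturn, Fin.ext_iff, Nat.find_eq_iff, and_comm]
  refine and_congr ⟨fun h i hi => ?_, fun h m hm hp => ?_⟩
    ⟨fun h h0 => h _ (by simp), fun h x hx => ?_⟩
  · exact h i i.isLt fun x hx => by convert hi; exact Fin.ext hx
  · exact h ⟨m, hm⟩ (hp _ rfl)
  · convert h (by omega)
    exact Fin.ext (by simp [hx])

theorem NonCrossing.not_rel_leftEmb_rightEmb (hr : r.NonCrossing) (hk : firstReturn r = k)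
    (i : Fin k) (j : Fin (n - k)) : ¬ r (leftEmb k i) (rightEmb k j) := fun hij =>
  (firstReturn_eq_iff.1 hk).1 i <| hr.rel_of_le_of_lt_of_le (Fin.zero_le _)
    (leftEmb_lt_rightEmb i ⟨0, j.pos⟩)
    (rightEmb_strictMono.monotone (Fin.le_def.2 (Nat.zero_le _)))
    ((firstReturn_eq_iff.1 hk).2 j.pos) hij

theorem comap_leftEmb_glue : (glue g h).comap (leftEmb k) = g :=
  Setoid.ext fun _ _ => (comap_rel _ _ _ _).trans glue_leftEmb_leftEmb

theorem comap_rightEmb_glue : (glue g h).comap (rightEmb k) = h :=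
  Setoid.ext fun _ _ => (comap_rel _ _ _ _).trans glue_rightEmb_rightEmb

theorem firstReturn_glue : firstReturn (glue g h) = k :=
  firstReturn_eq_iff.2
    ⟨fun _ => not_glue_zero_leftEmb, fun _ => glue_zero_rightEmb.2 (h.refl' _)⟩

theorem NonCrossing.glue_comap (hr : r.NonCrossing) (hk : firstReturn r = k) :
    Setoid.glue (r.comap (leftEmb k)) (r.comap (rightEmb k)) = r := by
  ext x y
  wlog hxy : x ≤ y generalizing x y
  · exact (comm' _).trans ((this y x (le_of_not_ge hxy)).trans (comm' _))
  obtain rfl | ⟨i, rfl⟩ | ⟨i, rfl⟩ := eq_zero_or_leftEmb_or_rightEmb (k := k) x <;>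
    obtain rfl | ⟨j, rfl⟩ | ⟨j, rfl⟩ := eq_zero_or_leftEmb_or_rightEmb (k := k) y
  · exact iff_of_true (refl' _ _) (refl' _ _)
  · exact iff_of_false not_glue_zero_leftEmb ((firstReturn_eq_iff.1 hk).1 j)
  · have h0 := (firstReturn_eq_iff.1 hk).2 j.pos
    rw [glue_zero_rightEmb, comap_rel]
    exact ⟨trans' _ h0, trans' _ (symm' _ h0)⟩
  · exact absurd (Fin.le_def.1 hxy) (by simp)
  · rw [glue_leftEmb_leftEmb, comap_rel]
  · exact iff_of_false not_glue_leftEmb_rightEmb (hr.not_rel_leftEmb_rightEmb hk i j)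
  · exact absurd (Fin.le_def.1 hxy) (by simp)
  · exact absurd hxy (leftEmb_lt_rightEmb j i).not_ge
  · rw [glue_rightEmb_rightEmb, comap_rel]

noncomputable def firstReturnEquiv (k : Fin (n + 1)) :
    {r : Setoid (Fin (n + 1)) // r.NonCrossing ∧ firstReturn r = k} ≃
      {g : Setoid (Fin k) // g.NonCrossing} × {h : Setoid (Fin (n - k)) // h.NonCrossing} where
  toFun r := (⟨r.1.comap (leftEmb k), r.2.1.comap leftEmb_strictMono⟩,
    ⟨r.1.comap (rightEmb k), r.2.1.comap rightEmb_strictMono⟩)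
  invFun p := ⟨glue p.1.1 p.2.1, p.1.2.glue p.2.2, firstReturn_glue⟩
  left_inv r := Subtype.ext (r.2.1.glue_comap r.2.2)
  right_inv _ := Prod.ext (Subtype.ext comap_leftEmb_glue) (Subtype.ext comap_rightEmb_glue)

theorem card_nonCrossing_succ (n : ℕ) :
    Nat.card {r : Setoid (Fin (n + 1)) // r.NonCrossing} =
      ∑ k : Fin (n + 1), Nat.card {g : Setoid (Fin k) // g.NonCrossing} *
        Nat.card {h : Setoid (Fin (n - k)) // h.NonCrossing} := by
  rw [← Nat.card_congr (Equiv.sigmaFiberEquiv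
    fun r : {r : Setoid (Fin (n + 1)) // r.NonCrossing} => firstReturn r.1), Nat.card_sigma]
  refine Finset.sum_congr rfl fun k _ => ?_
  rw [← Nat.card_prod, Nat.card_congr ((Equiv.subtypeSubtypeEquivSubtypeInter _
    (firstReturn · = k)).trans (firstReturnEquiv k))]

theorem card_nonCrossing (n : ℕ) : Nat.card {r : Setoid (Fin n) // r.NonCrossing} = catalan n := by
  induction n using Nat.strong_induction_on with
  | _ n ih =>
    cases n with
    | zero =>
      have : Subsingleton (Setoid (Fin 0)) := ⟨fun _ _ => Setoid.ext fun a => a.elim0⟩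
      rw [catalan_zero, Nat.card_eq_one_iff_unique]
      exact ⟨inferInstance, ⟨⊥, fun a => a.elim0⟩⟩
    | succ n =>
      rw [card_nonCrossing_succ, catalan_succ]
      exact Finset.sum_congr rfl fun k _ => by rw [ih k (by omega), ih (n - k) (by omega)]

end Setoid

theorem card_noncrossing_partitions_eq_catalan_general (n : ℕ) :
    Nat.card {P : Finpartition (Finset.univ : Finset (Fin n)) // P.NonCrossing} =
      catalan n := by
  rw [← Setoid.card_nonCrossing n]
  exact Nat.card_congr (Finpartition.equivSetoid.subtypeEquiv Finpartition.nonCrossing_iff)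

/-- The number of non-crossing partitions of an `n`-element cycle of points equals
the `n`-th Catalan number. -/
theorem card_noncrossing_partitions_eq_catalan (n : ℕ) (hn : 1 ≤ n) :
    Nat.card {P : Finpartition (Finset.univ : Finset (Fin n)) // P.NonCrossing} =
      catalan n :=
  card_noncrossing_partitions_eq_catalan_general n
end

section
/- For every real number x with 0 < x < 1/4, the series ∑_{n≥0} C(n)·xⁿ of Catalan numbers converges and equals (1 − √(1 − 4x))/(2x). -/
/-!
Write `L = ∑ C(n) xⁿ`. The recurrence `C(n+1) = ∑_{i+j=n} C(i) C(j)` turns, through the Cauchy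
product, into `L = 1 + x L²`, so `(1 - 2xL)² = 1 - 4x`. Which square root occurs is decided by
`2xL ≤ 1`: the partial sums stay below `1/(2x)` because `t ≤ 1/(2x)` implies
`1 + x t² ≤ 1 + 1/(4x) ≤ 1/(2x)` when `4x ≤ 1`. The same bound gives convergence.
-/

open Finset

theorem catalan_succ_mul_pow {R : Type*} [CommSemiring R] (x : R) (n : ℕ) :
    (catalan (n + 1) : R) * x ^ (n + 1) =
      x * ∑ p ∈ antidiagonal n,
        ((catalan p.1 : R) * x ^ p.1) * ((catalan p.2 : R) * x ^ p.2) := by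
  rw [catalan_succ', Nat.cast_sum, sum_mul, mul_sum]
  refine sum_congr rfl fun p hp => ?_
  rw [← HasAntidiagonal.mem_antidiagonal.mp hp]
  push_cast
  ring

theorem sum_range_sum_antidiagonal_le_sq {R : Type*} [CommSemiring R] [PartialOrder R]
    [IsOrderedRing R] {a : ℕ → R} (ha : ∀ n, 0 ≤ a n) (N : ℕ) :
    ∑ n ∈ range N, ∑ p ∈ antidiagonal n, a p.1 * a p.2 ≤
      (∑ i ∈ range N, a i) ^ 2 := by
  have hdisj : (range N : Set ℕ).PairwiseDisjoint antidiagonal := fun m _ n _ hmn =>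
    disjoint_left.mpr fun p hm hn => hmn <|
      (HasAntidiagonal.mem_antidiagonal.mp hm).symm.trans (HasAntidiagonal.mem_antidiagonal.mp hn)
  have hsub : (range N).biUnion antidiagonal ⊆ range N ×ˢ range N := by
    intro p hp
    obtain ⟨n, hn, hpn⟩ := mem_biUnion.mp hp
    rw [mem_range] at hn
    rw [HasAntidiagonal.mem_antidiagonal] at hpn
    simp only [mem_product, mem_range]
    omega
  calc ∑ n ∈ range N, ∑ p ∈ antidiagonal n, a p.1 * a p.2
      = ∑ p ∈ (range N).biUnion antidiagonal, a p.1 * a p.2 := (sum_biUnion hdisj).symm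
    _ ≤ ∑ p ∈ range N ×ˢ range N, a p.1 * a p.2 :=
        sum_le_sum_of_subset_of_nonneg hsub fun p _ _ => mul_nonneg (ha _) (ha _)
    _ = (∑ i ∈ range N, a i) ^ 2 := by rw [sq, sum_mul_sum, ← sum_product']

section CatalanSeries

variable {x : ℝ}

theorem catalan_mul_pow_nonneg (hx : 0 ≤ x) (n : ℕ) : 0 ≤ (catalan n : ℝ) * x ^ n := by
  positivity

theorem sum_range_catalan_mul_pow_le (hx0 : 0 < x) (hx : x ≤ 1 / 4) (N : ℕ) :
    ∑ n ∈ range N, (catalan n : ℝ) * x ^ n ≤ 1 / (2 * x) := by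
  induction N with
  | zero => simp only [range_zero, sum_empty]; positivity
  | succ N ih =>
    set S := ∑ n ∈ range N, (catalan n : ℝ) * x ^ n
    have hS : 0 ≤ S := sum_nonneg fun n _ => catalan_mul_pow_nonneg hx0.le n
    have hsq : x * S ^ 2 ≤ x * (1 / (2 * x)) ^ 2 := by gcongr
    have hfix : x * (1 / (2 * x)) ^ 2 + 1 ≤ 1 / (2 * x) := by
      rw [← sub_nonneg]
      have hgap : 1 / (2 * x) - (x * (1 / (2 * x)) ^ 2 + 1) = (1 - 4 * x) / (4 * x) := by
        field_simp
        ring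
      rw [hgap]
      exact div_nonneg (by linarith) (by positivity)
    calc ∑ n ∈ range (N + 1), (catalan n : ℝ) * x ^ n
        = x * ∑ n ∈ range N, ∑ p ∈ antidiagonal n,
            ((catalan p.1 : ℝ) * x ^ p.1) * ((catalan p.2 : ℝ) * x ^ p.2) + 1 := by
          simp only [sum_range_succ', catalan_succ_mul_pow, mul_sum, catalan_zero, Nat.cast_one,
            pow_zero, mul_one]
      _ ≤ x * S ^ 2 + 1 := by
          gcongr
          exact sum_range_sum_antidiagonal_le_sq (catalan_mul_pow_nonneg hx0.le) N
      _ ≤ 1 / (2 * x) := by linarith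

theorem summable_catalan_mul_pow (hx0 : 0 < x) (hx : x ≤ 1 / 4) :
    Summable fun n => (catalan n : ℝ) * x ^ n :=
  summable_of_sum_range_le (catalan_mul_pow_nonneg hx0.le) (sum_range_catalan_mul_pow_le hx0 hx)

theorem tsum_catalan_mul_pow_eq_one_add (hx0 : 0 < x) (hx : x ≤ 1 / 4) :
    ∑' n, (catalan n : ℝ) * x ^ n = 1 + x * (∑' n, (catalan n : ℝ) * x ^ n) ^ 2 := by
  have hs := summable_catalan_mul_pow hx0 hx
  rw [sq, tsum_mul_tsum_eq_tsum_sum_antidiagonal_of_summable_norm hs.norm hs.norm,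
    hs.tsum_eq_zero_add, ← tsum_mul_left]
  simp only [catalan_succ_mul_pow, catalan_zero, Nat.cast_one, pow_zero, mul_one]

end CatalanSeries

theorem eq_one_sub_sqrt_div_of_eq_one_add_mul_sq {x L : ℝ} (hx0 : 0 < x)
    (hL : L = 1 + x * L ^ 2) (hxL : 2 * x * L ≤ 1) :
    L = (1 - Real.sqrt (1 - 4 * x)) / (2 * x) := by
  have hsq : 1 - 4 * x = (1 - 2 * x * L) ^ 2 := by linear_combination 4 * x * hL
  rw [hsq, Real.sqrt_sq (sub_nonneg.mpr hxL)]
  field_simp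
  ring

/-- For `0 < x < 1/4`, the generating function of the Catalan numbers converges and
equals `(1 - √(1 - 4x)) / (2x)`. -/
theorem catalan_generating_function (x : ℝ) (hx0 : 0 < x) (hx : x < 1 / 4) :
    HasSum (fun n : ℕ => (catalan n : ℝ) * x ^ n)
      ((1 - Real.sqrt (1 - 4 * x)) / (2 * x)) := by
  have hx' : x ≤ 1 / 4 := hx.le
  have hbound : 2 * x * ∑' n, (catalan n : ℝ) * x ^ n ≤ 1 := by
    have hle := Real.tsum_le_of_sum_range_le (catalan_mul_pow_nonneg hx0.le)
      (sum_range_catalan_mul_pow_le hx0 hx')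
    rw [le_div_iff₀ (by positivity)] at hle
    linarith
  rw [← eq_one_sub_sqrt_div_of_eq_one_add_mul_sq hx0
    (tsum_catalan_mul_pow_eq_one_add hx0 hx') hbound]
  exact (summable_catalan_mul_pow hx0 hx').hasSum
end

section
/- For every real number z with 0 < z < 1/4, with T(z) = (1 − √(1 − 4z))/(2z) and B(z) = z·T(z), one has T(z)²·B(z)² < 1 and the generating function of double trees of type ■–■ satisfies B(z)²/(1 − T(z)²·B(z)²) = (1/16)(1 − 4z)^{−1/2} − (1/8)(1 − 4z)^{1/2} + (1/16)(1 − 4z)^{3/2}. -/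
/-!
With `s = √(1 - 4z) ∈ (0, 1)` one has `1 - s² = 4z`, hence `T = 2 / (1 + s)` and `B = (1 - s) / 2`,
so `T B = (1 - s) / (1 + s)` lies in `(0, 1)`. Then `1 - T² B² = 4s / (1 + s)²`, and the quotient
`B² / (1 - T² B²) = (1 - s²)² / (16 s) = (s⁻¹ - 2s + s³) / 16` is the claimed expansion.
-/

namespace Real

lemma rpow_neg_one_half_eq_inv_sqrt {x : ℝ} (hx : 0 ≤ x) : x ^ (-(1 / 2) : ℝ) = (√x)⁻¹ := by
  rw [rpow_neg hx, sqrt_eq_rpow]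

lemma rpow_three_halves_eq_sqrt_pow {x : ℝ} (hx : 0 ≤ x) : x ^ (3 / 2 : ℝ) = √x ^ 3 := by
  rw [sqrt_eq_rpow, ← rpow_mul_natCast hx]
  norm_num

end Real

lemma catalan_gf_eq_two_div {z s : ℝ} (hz : z ≠ 0) (hs : s ^ 2 = 1 - 4 * z) (hs' : 1 + s ≠ 0) :
    (1 - s) / (2 * z) = 2 / (1 + s) := by
  rw [div_eq_div_iff (mul_ne_zero two_ne_zero hz) hs']
  linear_combination -hs

lemma sq_one_sub_div_one_add_lt_one {s : ℝ} (hs : 0 < s) : ((1 - s) / (1 + s)) ^ 2 < 1 := by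
  rw [sq_lt_one_iff_abs_lt_one, abs_div, abs_of_pos (by linarith : 0 < 1 + s),
    div_lt_one (by linarith), abs_lt]
  constructor <;> linarith

lemma sq_div_one_sub_sq_one_sub_div_one_add {s : ℝ} (hs : s ≠ 0) (hs' : 1 + s ≠ 0) :
    ((1 - s) / 2) ^ 2 / (1 - ((1 - s) / (1 + s)) ^ 2) = 1 / 16 * s⁻¹ - 1 / 8 * s + 1 / 16 * s ^ 3 := by
  have hden : 1 - ((1 - s) / (1 + s)) ^ 2 = 4 * s / (1 + s) ^ 2 := by
    field_simp
    ring
  rw [hden]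
  field_simp
  ring

/-- For `0 < z < 1/4`, with `T(z) = (1 - √(1-4z))/(2z)` and `B(z) = z·T(z)`, one has
`T²B² < 1` and the generating function of double trees of type ■–■ satisfies
`B²/(1 - T²B²) = (1/16)(1-4z)^{-1/2} - (1/8)(1-4z)^{1/2} + (1/16)(1-4z)^{3/2}`. -/
theorem double_tree_gf_black_black (z : ℝ) (hz0 : 0 < z) (hz : z < 1 / 4) :
    let T := (1 - Real.sqrt (1 - 4 * z)) / (2 * z)
    let B := z * T
    T ^ 2 * B ^ 2 < 1 ∧
      B ^ 2 / (1 - T ^ 2 * B ^ 2) =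
        1 / 16 * (1 - 4 * z) ^ (-(1 / 2) : ℝ) - 1 / 8 * (1 - 4 * z) ^ ((1 / 2) : ℝ)
          + 1 / 16 * (1 - 4 * z) ^ ((3 / 2) : ℝ) := by
  intro T B
  have hx : 0 < 1 - 4 * z := by linarith
  set s := √(1 - 4 * z)
  have hs_pos : 0 < s := Real.sqrt_pos.2 hx
  have hs_ne : 1 + s ≠ 0 := by positivity
  have hT : T = 2 / (1 + s) := catalan_gf_eq_two_div hz0.ne' (Real.sq_sqrt hx.le) hs_ne
  have hB : B = (1 - s) / 2 := by
    show z * ((1 - s) / (2 * z)) = (1 - s) / 2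
    field_simp
  have hTB : T ^ 2 * B ^ 2 = ((1 - s) / (1 + s)) ^ 2 := by
    rw [hT, hB]
    field_simp
  rw [hTB, hB, Real.rpow_neg_one_half_eq_inv_sqrt hx.le, ← Real.sqrt_eq_rpow,
    Real.rpow_three_halves_eq_sqrt_pow hx.le]
  exact ⟨sq_one_sub_div_one_add_lt_one hs_pos,
    sq_div_one_sub_sq_one_sub_div_one_add hs_pos.ne' hs_ne⟩
end
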